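/- Let A, B be n×n real symmetric matrices and let X, Y be commuting real symmetric matrices that are jointly diagonalized by an orthogonal matrix U (i.e., UᵀXU and UᵀYU are diagonal). Then off(UᵀAU) + off(UᵀBU) ≤ ‖A−X‖_F² + ‖B−Y‖_F², where off(M) = ∑_{i≠j} m_{ij}². Consequently J(A,B) ≤ C_sym(A,B), where C_sym is the infimum of ‖A−X‖_F² + ‖B−Y‖_F² over commuting symmetric pairs (X,Y). -/

import Mathlib

/-!
Orthogonal conjugation preserves the Frobenius norm, so if `UᵀXU` is diagonal then
`‖A - X‖_F² = ‖UᵀAU - UᵀXU‖_F²`, and subtracting a diagonal matrix does not touch the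
off-diagonal entries of `UᵀAU`; hence `off (UᵀAU) ≤ ‖A - X‖_F²`. For the bound on infima,
commuting symmetric matrices have a common orthonormal eigenbasis (the joint eigenspaces of the
two operators decompose the space orthogonally), so every commuting symmetric pair `(X', Y')`
is jointly diagonalized by some orthogonal `V`, and the first bound applies to `V`.
-/

open Matrix

open Finset

/-- The Frobenius norm of a real square matrix. -/
noncomputable def frob {n : ℕ} (A : Matrix (Fin n) (Fin n) ℝ) : ℝ :=
  Real.sqrt (∑ i, ∑ j, (A i j) ^ 2)

/-- Sum of squares of the off-diagonal entries. -/
def off {n : ℕ} (M : Matrix (Fin n) (Fin n) ℝ) : ℝ :=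
  ∑ i, ∑ j, if i = j then 0 else (M i j) ^ 2

theorem Matrix.sum_sq_eq_trace_transpose_mul {m n R : Type*} [Fintype m] [Fintype n]
    [CommSemiring R] (M : Matrix m n R) : ∑ i, ∑ j, M i j ^ 2 = trace (Mᵀ * M) := by
  simp only [trace, diag, mul_apply, transpose_apply, sq]
  exact Finset.sum_comm

theorem Matrix.sum_sq_transpose_mul_mul_of_orthogonal {n R : Type*} [Fintype n] [DecidableEq n]
    [CommRing R] (M U : Matrix n n R) (hU : Uᵀ * U = 1) :
    ∑ i, ∑ j, (Uᵀ * M * U) i j ^ 2 = ∑ i, ∑ j, M i j ^ 2 := by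
  have hU' : U * Uᵀ = 1 := mul_eq_one_comm.mp hU
  rw [sum_sq_eq_trace_transpose_mul, sum_sq_eq_trace_transpose_mul, transpose_mul, transpose_mul,
    transpose_transpose]
  simp only [Matrix.mul_assoc]
  rw [← Matrix.mul_assoc U Uᵀ, hU', Matrix.one_mul, trace_mul_comm, Matrix.mul_assoc,
    Matrix.mul_assoc, hU', Matrix.mul_one]

theorem frob_sq {n : ℕ} (M : Matrix (Fin n) (Fin n) ℝ) : frob M ^ 2 = ∑ i, ∑ j, M i j ^ 2 :=
  Real.sq_sqrt (by positivity)

theorem off_nonneg {n : ℕ} (M : Matrix (Fin n) (Fin n) ℝ) : 0 ≤ off M :=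
  Finset.sum_nonneg fun i _ ↦ Finset.sum_nonneg fun j _ ↦ by split_ifs <;> positivity

theorem off_le_sum_sq_sub_of_isDiag {n : ℕ} (M : Matrix (Fin n) (Fin n) ℝ)
    {D : Matrix (Fin n) (Fin n) ℝ} (hD : D.IsDiag) : off M ≤ ∑ i, ∑ j, (M - D) i j ^ 2 := by
  refine Finset.sum_le_sum fun i _ ↦ Finset.sum_le_sum fun j _ ↦ ?_
  by_cases hij : i = j
  · rw [if_pos hij]; positivity
  · rw [if_neg hij, Matrix.sub_apply, hD hij, sub_zero]

theorem off_conj_le_frob_sub_sq {n : ℕ} (A X U : Matrix (Fin n) (Fin n) ℝ) (hU : Uᵀ * U = 1)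
    (hX : (Uᵀ * X * U).IsDiag) : off (Uᵀ * A * U) ≤ frob (A - X) ^ 2 :=
  calc off (Uᵀ * A * U) ≤ ∑ i, ∑ j, (Uᵀ * A * U - Uᵀ * X * U) i j ^ 2 :=
        off_le_sum_sq_sub_of_isDiag _ hX
    _ = ∑ i, ∑ j, (Uᵀ * (A - X) * U) i j ^ 2 := by rw [Matrix.mul_sub, Matrix.sub_mul]
    _ = frob (A - X) ^ 2 := by rw [sum_sq_transpose_mul_mul_of_orthogonal _ _ hU, frob_sq]

open Module.End

theorem LinearMap.IsSymmetric.exists_orthonormalBasis_hasEigenvector_of_commute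
    {𝕜 E : Type*} [RCLike 𝕜] [NormedAddCommGroup E] [InnerProductSpace 𝕜 E]
    [FiniteDimensional 𝕜 E] {A B : E →ₗ[𝕜] E} (hA : A.IsSymmetric) (hB : B.IsSymmetric)
    (hAB : Commute A B) {n : ℕ} (hn : Module.finrank 𝕜 E = n) :
    ∃ (b : OrthonormalBasis (Fin n) 𝕜 E) (α β : Fin n → 𝕜),
      ∀ k, A (b k) = α k • b k ∧ B (b k) = β k • b k := by
  classical
  set V : 𝕜 × 𝕜 → Submodule 𝕜 E := fun γ ↦ eigenspace A γ.2 ⊓ eigenspace B γ.1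
  have hV₀ : DirectSum.IsInternal V := directSum_isInternal_of_commute hA hB hAB
  -- `subordinateOrthonormalBasis` needs a finite index: keep only the nonzero joint eigenspaces.
  let _ : Fintype {γ // V γ ≠ ⊥} :=
    hV₀.submodule_iSupIndep.fintypeNeBotOfFiniteDimensional
  have hV : DirectSum.IsInternal fun γ : {γ // V γ ≠ ⊥} ↦ V γ :=
    DirectSum.isInternal_ne_bot_iff.mpr hV₀
  have hV' : OrthogonalFamily 𝕜 (fun γ : {γ // V γ ≠ ⊥} ↦ V γ) fun γ ↦ (V γ).subtypeₗᵢ :=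
    (orthogonalFamily_eigenspace_inf_eigenspace hA hB).comp Subtype.val_injective
  refine ⟨hV.subordinateOrthonormalBasis hn hV',
    fun k ↦ (hV.subordinateOrthonormalBasisIndex hn k hV').1.2,
    fun k ↦ (hV.subordinateOrthonormalBasisIndex hn k hV').1.1, fun k ↦ ?_⟩
  obtain ⟨hkA, hkB⟩ := hV.subordinateOrthonormalBasis_subordinate hn k hV'
  exact ⟨mem_eigenspace_iff.mp hkA, mem_eigenspace_iff.mp hkB⟩

theorem Matrix.isDiag_transpose_mul_mul_of_mulVec_col {ι R : Type*} [Fintype ι] [DecidableEq ι]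
    [CommRing R] {M U : Matrix ι ι R} (hU : Uᵀ * U = 1) (μ : ι → R)
    (hM : ∀ k, M *ᵥ U.col k = μ k • U.col k) : (Uᵀ * M * U).IsDiag := by
  have hMU : M * U = U * diagonal μ := by
    ext i k
    rw [mul_diagonal, mul_comm]
    simpa [mulVec, dotProduct, mul_apply] using congr_fun (hM k) i
  rw [Matrix.mul_assoc, hMU, ← Matrix.mul_assoc, hU, Matrix.one_mul]
  exact isDiag_diagonal μ

theorem Matrix.exists_orthogonal_isDiag_conj_of_commute {ι : Type*} [Fintype ι] [DecidableEq ι]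
    {X Y : Matrix ι ι ℝ} (hX : X.IsSymm) (hY : Y.IsSymm) (hXY : Commute X Y) :
    ∃ U : Matrix ι ι ℝ, Uᵀ * U = 1 ∧ (Uᵀ * X * U).IsDiag ∧ (Uᵀ * Y * U).IsDiag := by
  have hXs := isSymmetric_toEuclideanLin_iff.mpr (isHermitian_iff_isSymm.mpr hX)
  have hYs := isSymmetric_toEuclideanLin_iff.mpr (isHermitian_iff_isSymm.mpr hY)
  obtain ⟨b, α, β, hb⟩ := hXs.exists_orthonormalBasis_hasEigenvector_of_commute hYs
    (hXY.map (toLpLinAlgEquiv 2)) finrank_euclideanSpace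
  set e := (Fintype.equivFin ι).symm
  set b' := b.reindex e
  set U := (EuclideanSpace.basisFun ι ℝ).toBasis.toMatrix b'.toBasis
  have hU : Uᵀ * U = 1 := by
    rw [← conjTranspose_eq_transpose_of_trivial]
    exact (EuclideanSpace.basisFun ι ℝ).toMatrix_orthonormalBasis_conjTranspose_mul_self b'
  have hcol : ∀ k, U.col k = b (e.symm k) := fun k ↦ by
    ext i; simp [U, b', Module.Basis.toMatrix_apply]
  refine ⟨U, hU, isDiag_transpose_mul_mul_of_mulVec_col hU (α ∘ e.symm) fun k ↦ ?_,
    isDiag_transpose_mul_mul_of_mulVec_col hU (β ∘ e.symm) fun k ↦ ?_⟩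
  · rw [hcol]; simpa using congr_arg WithLp.ofLp (hb (e.symm k)).1
  · rw [hcol]; simpa using congr_arg WithLp.ofLp (hb (e.symm k)).2

theorem joint_diag_le_closest_commuting_sym_general {n : ℕ}
    (A B X Y U : Matrix (Fin n) (Fin n) ℝ)
    (hU : Uᵀ * U = 1)
    (hdX : (Uᵀ * X * U).IsDiag) (hdY : (Uᵀ * Y * U).IsDiag) :
    off (Uᵀ * A * U) + off (Uᵀ * B * U) ≤
        frob (A - X) ^ 2 + frob (B - Y) ^ 2 ∧
    sInf {c : ℝ | ∃ V : Matrix (Fin n) (Fin n) ℝ, Vᵀ * V = 1 ∧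
        c = off (Vᵀ * A * V) + off (Vᵀ * B * V)} ≤
    sInf {c : ℝ | ∃ X' Y' : Matrix (Fin n) (Fin n) ℝ, X'.IsSymm ∧ Y'.IsSymm ∧
        X' * Y' = Y' * X' ∧ c = frob (A - X') ^ 2 + frob (B - Y') ^ 2} := by
  refine ⟨add_le_add (off_conj_le_frob_sub_sq A X U hU hdX) (off_conj_le_frob_sub_sq B Y U hU hdY),
    le_csInf ⟨_, 0, 0, isSymm_zero, isSymm_zero, rfl, rfl⟩ ?_⟩
  rintro _ ⟨X', Y', hX', hY', hXY', rfl⟩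
  obtain ⟨V, hV, hVX, hVY⟩ := exists_orthogonal_isDiag_conj_of_commute hX' hY' hXY'
  have hbdd : BddBelow {c : ℝ | ∃ V : Matrix (Fin n) (Fin n) ℝ, Vᵀ * V = 1 ∧
      c = off (Vᵀ * A * V) + off (Vᵀ * B * V)} :=
    ⟨0, by rintro _ ⟨W, -, rfl⟩; exact add_nonneg (off_nonneg _) (off_nonneg _)⟩
  calc _ ≤ off (Vᵀ * A * V) + off (Vᵀ * B * V) := csInf_le hbdd ⟨V, hV, rfl⟩
    _ ≤ frob (A - X') ^ 2 + frob (B - Y') ^ 2 :=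
      add_le_add (off_conj_le_frob_sub_sq A X' V hV hVX) (off_conj_le_frob_sub_sq B Y' V hV hVY)

/-- If X, Y are commuting symmetric matrices jointly diagonalized by an
orthogonal U, then off(UᵀAU) + off(UᵀBU) ≤ ‖A−X‖_F² + ‖B−Y‖_F²;
consequently J(A,B) ≤ C_sym(A,B). -/
theorem joint_diag_le_closest_commuting_sym {n : ℕ}
    (A B X Y U : Matrix (Fin n) (Fin n) ℝ)
    (hA : A.IsSymm) (hB : B.IsSymm) (hX : X.IsSymm) (hY : Y.IsSymm)
    (hcomm : X * Y = Y * X) (hU : Uᵀ * U = 1)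
    (hdX : (Uᵀ * X * U).IsDiag) (hdY : (Uᵀ * Y * U).IsDiag) :
    off (Uᵀ * A * U) + off (Uᵀ * B * U) ≤
        frob (A - X) ^ 2 + frob (B - Y) ^ 2 ∧
    sInf {c : ℝ | ∃ V : Matrix (Fin n) (Fin n) ℝ, Vᵀ * V = 1 ∧
        c = off (Vᵀ * A * V) + off (Vᵀ * B * V)} ≤
    sInf {c : ℝ | ∃ X' Y' : Matrix (Fin n) (Fin n) ℝ, X'.IsSymm ∧ Y'.IsSymm ∧
        X' * Y' = Y' * X' ∧ c = frob (A - X') ^ 2 + frob (B - Y') ^ 2} :=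
  joint_diag_le_closest_commuting_sym_general A B X Y U hU hdX hdY
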